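/- Let g : ℝ → ℝ satisfy g(0) = 0, g'(t) = (1 + 2 g(t)^2)^(-1/2) for t ≥ 0, extended oddly. Then there exists a constant C > 0 such that |g(t)| ≥ C|t| whenever |t| ≤ 1 and |g(t)| ≥ C|t|^(1/2) whenever |t| ≥ 1. -/

import Mathlib

/-! For `t ≥ 0` we have `g t ≥ 0`, and `g + g²` grows at least as fast as `t`, because
`(1 + 2g) / √(1 + 2g²) ≥ 1` when `g ≥ 0`. Hence `g t + g t ^ 2 ≥ t`, which forces `g t ≥ t / 2`
for `t ≤ 1` and `g t ≥ √t / 2` for `t ≥ 1`; oddness transfers both bounds to negative `t`. -/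

open Set

theorem monotoneOn_Ici_of_hasDerivAt_nonneg {f f' : ℝ → ℝ} {a : ℝ}
    (hf : ∀ t, a ≤ t → HasDerivAt f (f' t) t) (hf' : ∀ t, a ≤ t → 0 ≤ f' t) :
    MonotoneOn f (Ici a) := by
  refine monotoneOn_of_hasDerivWithinAt_nonneg (f' := f') (convex_Ici a)
    (fun t ht => (hf t ht).continuousAt.continuousWithinAt) (fun t ht => ?_) (fun t ht => ?_)
  all_goals rw [interior_Ici] at ht
  · exact (hf t (le_of_lt ht)).hasDerivWithinAt
  · exact hf' t (le_of_lt ht)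

theorem abs_apply_eq_apply_abs_of_odd {g : ℝ → ℝ} (hodd : ∀ t, g (-t) = -g t)
    (hnonneg : ∀ t, 0 ≤ t → 0 ≤ g t) (t : ℝ) : |g t| = g |t| := by
  rcases le_or_gt 0 t with ht | ht
  · rw [abs_of_nonneg ht, abs_of_nonneg (hnonneg t ht)]
  · have hneg := hnonneg (-t) (by linarith)
    rw [hodd] at hneg
    rw [abs_of_neg ht, hodd, abs_of_nonpos (by linarith)]

theorem half_le_of_le_add_sq {t y : ℝ} (hy : 0 ≤ y) (ht1 : t ≤ 1)
    (h : t ≤ y + y ^ 2) : t / 2 ≤ y := by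
  nlinarith

theorem sqrt_div_two_le_of_le_add_sq {t y : ℝ} (hy : 0 ≤ y) (ht1 : 1 ≤ t)
    (h : t ≤ y + y ^ 2) : √t / 2 ≤ y := by
  have hs : 1 ≤ √t := Real.one_le_sqrt.mpr ht1
  have hst : √t ^ 2 = t := Real.sq_sqrt (by linarith)
  nlinarith

section InvSqrtODE

variable {g : ℝ → ℝ} (hg0 : g 0 = 0)
  (hgd : ∀ t : ℝ, 0 ≤ t → HasDerivAt g (1 / √(1 + 2 * g t ^ 2)) t)
include hg0 hgd

theorem nonneg_of_inv_sqrt_ode {t : ℝ} (ht : 0 ≤ t) : 0 ≤ g t :=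
  hg0 ▸ monotoneOn_Ici_of_hasDerivAt_nonneg hgd (fun _ _ => by positivity)
    self_mem_Ici ht ht

theorem le_add_sq_of_inv_sqrt_ode {t : ℝ} (ht : 0 ≤ t) : t ≤ g t + g t ^ 2 := by
  have hderiv : ∀ s, 0 ≤ s →
      HasDerivAt (fun s => g s + g s ^ 2 - s) (1 / √(1 + 2 * g s ^ 2) * (1 + 2 * g s) - 1) s := by
    intro s hs
    refine (((hgd s hs).add ((hgd s hs).pow 2)).sub (hasDerivAt_id' s)).congr_deriv ?_
    ring
  have hderiv_nonneg : ∀ s, 0 ≤ s → 0 ≤ 1 / √(1 + 2 * g s ^ 2) * (1 + 2 * g s) - 1 := by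
    intro s hs
    have hgs := nonneg_of_inv_sqrt_ode hg0 hgd hs
    rw [sub_nonneg, one_div_mul_eq_div, one_le_div (by positivity)]
    exact (Real.sqrt_le_left (by linarith)).mpr (by nlinarith)
  have := monotoneOn_Ici_of_hasDerivAt_nonneg hderiv hderiv_nonneg self_mem_Ici ht ht
  simp only [hg0] at this
  linarith

end InvSqrtODE

theorem stmt_5 (g : ℝ → ℝ) (hg0 : g 0 = 0)
    (hgd : ∀ t : ℝ, 0 ≤ t → HasDerivAt g (1 / Real.sqrt (1 + 2 * g t ^ 2)) t)
    (hodd : ∀ t : ℝ, g (-t) = - g t) :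
    ∃ C : ℝ, 0 < C ∧ (∀ t : ℝ, |t| ≤ 1 → C * |t| ≤ |g t|) ∧
      (∀ t : ℝ, 1 ≤ |t| → C * |t| ^ ((1 : ℝ) / 2) ≤ |g t|) := by
  have habs := abs_apply_eq_apply_abs_of_odd hodd fun t ht => nonneg_of_inv_sqrt_ode hg0 hgd ht
  have hnonneg t := nonneg_of_inv_sqrt_ode hg0 hgd (abs_nonneg t)
  have hgrowth t := le_add_sq_of_inv_sqrt_ode hg0 hgd (abs_nonneg t)
  refine ⟨1 / 2, by norm_num, fun t ht => ?_, fun t ht => ?_⟩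
  · rw [habs]
    linarith [half_le_of_le_add_sq (hnonneg t) ht (hgrowth t)]
  · rw [habs, ← Real.sqrt_eq_rpow]
    linarith [sqrt_div_two_le_of_le_add_sq (hnonneg t) ht (hgrowth t)]
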